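/- arXiv:1505.04638 — 3 statements merged into one kernel-verified Lean document; each statement's English description precedes it below -/
import Mathlib

section
/- Let H be a complex Hilbert space, let U and W be unitary operators on H satisfying the Weyl-type commutation relation U∘W = e^{iγ}·(W∘U) for some real γ, and let ψ ∈ H with ‖ψ‖ = 1. Then |⟨ψ, Uψ⟩|² + |⟨ψ, Wψ⟩|² ≤ B(γ), where B(γ) = 2/(1 + √((1 − cos γ)/2)). -/
open scoped InnerProductSpace ComplexConjugate

/-!
Write `u = ⟪ψ, Uψ⟫`, `w = ⟪ψ, Wψ⟫` and split `Uψ = uψ + r_U`, `Wψ = wψ + r_W` with `r_U, r_W ⊥ ψ`,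
so `‖r_U‖² = 1 - |u|²` and `‖r_W‖² = 1 - |w|²`. Pairing the relation `UWψ = e^{iγ} WUψ` with `ψ`
gives `(1 - e^{iγ}) u w = e^{iγ} ⟪ψ, W r_U⟫ - ⟪ψ, U r_W⟫`. For `r ⊥ ψ` one has
`⟪ψ, V r⟫ = ⟪ψ - ⟪Vψ, ψ⟫ Vψ, V r⟫`, so Cauchy–Schwarz bounds each term on the right by
`√((1 - |u|²)(1 - |w|²))`. Since `|1 - e^{iγ}| = 2t` with `t = √((1 - cos γ)/2)`, this yields
`t² |u|² |w|² ≤ (1 - |u|²)(1 - |w|²)`, and an elementary quadratic estimate turns this into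
`|u|² + |w|² ≤ 2/(1 + t)`.
-/

lemma add_le_two_div_one_add_of_sq_mul_mul_le {t p q : ℝ} (ht0 : 0 ≤ t) (ht1 : t ≤ 1)
    (hp1 : p ≤ 1) (hq1 : q ≤ 1)
    (h : t ^ 2 * (p * q) ≤ (1 - p) * (1 - q)) :
    p + q ≤ 2 / (1 + t) := by
  rw [le_div_iff₀ (by linarith)]
  -- With `4pq ≤ (p + q)²`, the hypothesis gives `((1 + t)(p + q) - 2)((1 - t)(p + q) - 2) ≥ 0`,
  -- and the second factor is negative unless `t = 0` and `p + q = 2`.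
  have hquad : 0 ≤ ((1 + t) * (p + q) - 2) * ((1 - t) * (p + q) - 2) := by
    nlinarith [mul_nonneg (by nlinarith : (0 : ℝ) ≤ 1 - t ^ 2) (sq_nonneg (p - q))]
  by_contra! hlt
  have hsecond : 0 ≤ (1 - t) * (p + q) - 2 := by
    by_contra! hneg
    nlinarith
  nlinarith

lemma norm_one_sub_exp_I_mul (γ : ℝ) :
    ‖1 - Complex.exp (Complex.I * γ)‖ = 2 * Real.sqrt ((1 - Real.cos γ) / 2) := by
  have hsin : Real.sin (γ / 2) ^ 2 = (1 - Real.cos γ) / 2 := by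
    have := Real.cos_sq (γ / 2)
    rw [mul_div_cancel₀ γ two_ne_zero] at this
    linarith [Real.sin_sq_add_cos_sq (γ / 2)]
  rw [norm_sub_rev, Complex.norm_exp_I_mul_ofReal_sub_one, norm_mul, ← hsin,
    Real.sqrt_sq_eq_abs, Real.norm_eq_abs, Real.norm_eq_abs, abs_two]

section InnerProductSpace

variable {H : Type*} [NormedAddCommGroup H] [InnerProductSpace ℂ H]

lemma inner_sub_inner_smul_self {φ : H} (hφ : ‖φ‖ = 1) (x : H) :
    ⟪φ, x - ⟪φ, x⟫_ℂ • φ⟫_ℂ = 0 := by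
  rw [inner_sub_right, inner_smul_right, inner_self_eq_norm_sq_to_K, hφ]
  simp

lemma norm_sub_inner_smul_sq {φ : H} (hφ : ‖φ‖ = 1) (x : H) :
    ‖x - ⟪φ, x⟫_ℂ • φ‖ ^ 2 = ‖x‖ ^ 2 - ‖⟪φ, x⟫_ℂ‖ ^ 2 := by
  rw [norm_sub_sq (𝕜 := ℂ), inner_smul_right, ← inner_conj_symm x φ, Complex.mul_conj',
    norm_smul, hφ, mul_one, RCLike.re_to_complex, ← Complex.ofReal_pow, Complex.ofReal_re]
  ring

lemma norm_sub_inner_smul {φ : H} (hφ : ‖φ‖ = 1) {x : H} (hx : ‖x‖ = 1) :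
    ‖x - ⟪φ, x⟫_ℂ • φ‖ = Real.sqrt (1 - ‖⟪φ, x⟫_ℂ‖ ^ 2) := by
  have hsq := norm_sub_inner_smul_sq hφ x
  rw [hx, one_pow] at hsq
  rw [← hsq, Real.sqrt_sq (norm_nonneg _)]

lemma norm_inner_map_le_of_inner_eq_zero (V : H →ₗᵢ[ℂ] H) {ψ r : H} (hψ : ‖ψ‖ = 1)
    (hr : ⟪ψ, r⟫_ℂ = 0) :
    ‖⟪ψ, V r⟫_ℂ‖ ≤ Real.sqrt (1 - ‖⟪ψ, V ψ⟫_ℂ‖ ^ 2) * ‖r‖ := by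
  have hVψ : ‖V ψ‖ = 1 := by rw [V.norm_map, hψ]
  -- `V r ⊥ V ψ`, so only the component of `ψ` orthogonal to `V ψ` pairs with `V r`.
  have hproj : ⟪ψ, V r⟫_ℂ = ⟪ψ - ⟪V ψ, ψ⟫_ℂ • V ψ, V r⟫_ℂ := by
    rw [inner_sub_left, inner_smul_left, V.inner_map_map, hr, mul_zero, sub_zero]
  have hnorm : ‖ψ - ⟪V ψ, ψ⟫_ℂ • V ψ‖ = Real.sqrt (1 - ‖⟪ψ, V ψ⟫_ℂ‖ ^ 2) := by
    rw [norm_sub_inner_smul hVψ hψ, ← inner_conj_symm, Complex.norm_conj]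
  calc ‖⟪ψ, V r⟫_ℂ‖ ≤ ‖ψ - ⟪V ψ, ψ⟫_ℂ • V ψ‖ * ‖V r‖ := hproj ▸ norm_inner_le_norm _ _
    _ = Real.sqrt (1 - ‖⟪ψ, V ψ⟫_ℂ‖ ^ 2) * ‖r‖ := by rw [hnorm, V.norm_map]

lemma norm_one_sub_mul_le_of_map_map_eq_smul (U W : H →ₗᵢ[ℂ] H) {e : ℂ} (he : ‖e‖ = 1)
    {ψ : H} (hψ : ‖ψ‖ = 1) (hUW : U (W ψ) = e • W (U ψ)) :
    ‖1 - e‖ * (‖⟪ψ, U ψ⟫_ℂ‖ * ‖⟪ψ, W ψ⟫_ℂ‖)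
      ≤ 2 * (Real.sqrt (1 - ‖⟪ψ, U ψ⟫_ℂ‖ ^ 2) * Real.sqrt (1 - ‖⟪ψ, W ψ⟫_ℂ‖ ^ 2)) := by
  set u := ⟪ψ, U ψ⟫_ℂ
  set w := ⟪ψ, W ψ⟫_ℂ
  set rU := U ψ - u • ψ
  set rW := W ψ - w • ψ
  have hrU : ‖rU‖ = Real.sqrt (1 - ‖u‖ ^ 2) := norm_sub_inner_smul hψ (by rw [U.norm_map, hψ])
  have hrW : ‖rW‖ = Real.sqrt (1 - ‖w‖ ^ 2) := norm_sub_inner_smul hψ (by rw [W.norm_map, hψ])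
  have hcomm : (1 - e) * (u * w) = e * ⟪ψ, W rU⟫_ℂ - ⟪ψ, U rW⟫_ℂ := by
    have hpair := congrArg (⟪ψ, ·⟫_ℂ) hUW
    simp only [rU, rW, map_sub, map_smul, inner_sub_right, inner_smul_right] at hpair ⊢
    linear_combination hpair
  calc ‖1 - e‖ * (‖u‖ * ‖w‖) = ‖e * ⟪ψ, W rU⟫_ℂ - ⟪ψ, U rW⟫_ℂ‖ := by
        rw [← hcomm, norm_mul, norm_mul]
    _ ≤ ‖⟪ψ, W rU⟫_ℂ‖ + ‖⟪ψ, U rW⟫_ℂ‖ := by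
        simpa only [norm_mul, he, one_mul] using norm_sub_le (e * ⟪ψ, W rU⟫_ℂ) ⟪ψ, U rW⟫_ℂ
    _ ≤ Real.sqrt (1 - ‖w‖ ^ 2) * ‖rU‖ + Real.sqrt (1 - ‖u‖ ^ 2) * ‖rW‖ :=
        add_le_add (norm_inner_map_le_of_inner_eq_zero W hψ (inner_sub_inner_smul_self hψ _))
          (norm_inner_map_le_of_inner_eq_zero U hψ (inner_sub_inner_smul_self hψ _))
    _ = 2 * (Real.sqrt (1 - ‖u‖ ^ 2) * Real.sqrt (1 - ‖w‖ ^ 2)) := by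
        rw [hrU, hrW]; ring

end InnerProductSpace

theorem weyl_pair_characteristic_uncertainty_general
    {H : Type*} [NormedAddCommGroup H] [InnerProductSpace ℂ H]
    (U W : H →L[ℂ] H)
    (hU_inner : ∀ x y : H, ⟪U x, U y⟫_ℂ = ⟪x, y⟫_ℂ)
    (hW_inner : ∀ x y : H, ⟪W x, W y⟫_ℂ = ⟪x, y⟫_ℂ)
    (γ : ℝ)
    (hWeyl : U ∘L W = Complex.exp (Complex.I * γ) • (W ∘L U))
    (ψ : H) (hψ : ‖ψ‖ = 1) :
    ‖⟪ψ, U ψ⟫_ℂ‖ ^ 2 + ‖⟪ψ, W ψ⟫_ℂ‖ ^ 2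
      ≤ 2 / (1 + Real.sqrt ((1 - Real.cos γ) / 2)) := by
  let U' := U.toLinearMap.isometryOfInner hU_inner
  let W' := W.toLinearMap.isometryOfInner hW_inner
  set a := ‖⟪ψ, U ψ⟫_ℂ‖
  set b := ‖⟪ψ, W ψ⟫_ℂ‖
  set t := Real.sqrt ((1 - Real.cos γ) / 2)
  have ha1 : a ^ 2 ≤ 1 := pow_le_one₀ (norm_nonneg _) <|
    (norm_inner_le_norm ψ (U' ψ)).trans_eq (by rw [U'.norm_map, hψ, one_mul])
  have hb1 : b ^ 2 ≤ 1 := pow_le_one₀ (norm_nonneg _) <|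
    (norm_inner_le_norm ψ (W' ψ)).trans_eq (by rw [W'.norm_map, hψ, one_mul])
  have hcomm : U (W ψ) = Complex.exp (Complex.I * γ) • W (U ψ) := by
    simpa using congr($hWeyl ψ)
  have hkey : t * (a * b) ≤ Real.sqrt (1 - a ^ 2) * Real.sqrt (1 - b ^ 2) := by
    refine le_of_mul_le_mul_left ?_ two_pos
    rw [← mul_assoc, ← norm_one_sub_exp_I_mul]
    refine norm_one_sub_mul_le_of_map_map_eq_smul U' W' ?_ hψ hcomm
    rw [Complex.norm_exp_I_mul_ofReal]
  have hsq : t ^ 2 * (a ^ 2 * b ^ 2) ≤ (1 - a ^ 2) * (1 - b ^ 2) := by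
    have := pow_le_pow_left₀ (by positivity) hkey 2
    rwa [mul_pow, mul_pow, mul_pow, Real.sq_sqrt (sub_nonneg.mpr ha1),
      Real.sq_sqrt (sub_nonneg.mpr hb1)] at this
  exact add_le_two_div_one_add_of_sq_mul_mul_le (Real.sqrt_nonneg _)
    (Real.sqrt_le_one.mpr (by linarith [Real.neg_one_le_cos γ])) ha1 hb1 hsq

/-- **Uncertainty relation for a Weyl pair of unitaries.**
If `U` and `W` are unitary operators on a complex Hilbert space `H` satisfying the
Weyl-type commutation relation `U ∘ W = e^{iγ} • (W ∘ U)`, and `ψ` is a unit vector,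
then `|⟨ψ, Uψ⟩|² + |⟨ψ, Wψ⟩|² ≤ B(γ)` with `B(γ) = 2/(1 + √((1 − cos γ)/2))`. -/
theorem weyl_pair_characteristic_uncertainty
    {H : Type*} [NormedAddCommGroup H] [InnerProductSpace ℂ H] [CompleteSpace H]
    (U W : H →L[ℂ] H)
    (hU_inner : ∀ x y : H, ⟪U x, U y⟫_ℂ = ⟪x, y⟫_ℂ) (hU_surj : Function.Surjective U)
    (hW_inner : ∀ x y : H, ⟪W x, W y⟫_ℂ = ⟪x, y⟫_ℂ) (hW_surj : Function.Surjective W)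
    (γ : ℝ)
    (hWeyl : U ∘L W = Complex.exp (Complex.I * γ) • (W ∘L U))
    (ψ : H) (hψ : ‖ψ‖ = 1) :
    ‖⟪ψ, U ψ⟫_ℂ‖ ^ 2 + ‖⟪ψ, W ψ⟫_ℂ‖ ^ 2
      ≤ 2 / (1 + Real.sqrt ((1 - Real.cos γ) / 2)) :=
  weyl_pair_characteristic_uncertainty_general U W hU_inner hW_inner γ hWeyl ψ hψ
end

section
/- Let H be a complex Hilbert space, let U and W be unitary operators on H with U∘W = e^{iγ}·(W∘U) for some real γ, and let ψ ∈ H be a unit vector. Set Λ = |⟨ψ, Uψ⟩|² + |⟨ψ, Wψ⟩|², Ω = ⟨Uψ, Wψ⟩, and z = |1 + e^{iγ}|/2. If z·|Ω| < 1, then Λ ≤ (1 − |Ω|²)/(1 − z·|Ω|). -/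
/-!
The Gram determinant of `(ψ, Uψ, Wψ)` is nonnegative, which for `a = ⟨ψ, Uψ⟩`, `b = ⟨ψ, Wψ⟩`
reads `Λ + |Ω|² ≤ 1 + 2 Re(a Ω b̄)`. The inverses `U⁻¹, W⁻¹` satisfy the same commutation
relation, and for them the Gram inequality has the same `Λ` and `|Ω|` but cross term
`Re(e^{iγ} a Ω b̄)`. Averaging the two gives `Λ + |Ω|² ≤ 1 + Re((1 + e^{iγ}) a Ω b̄)
≤ 1 + z |Ω| Λ`, using `2|a||b| ≤ Λ`.
-/

open scoped InnerProductSpace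

section

open scoped ComplexConjugate ComplexOrder
open RCLike

variable {𝕜 E : Type*} [RCLike 𝕜] [NormedAddCommGroup E] [InnerProductSpace 𝕜 E]

theorem norm_inner_sq_add_le_of_norm_eq_one {ψ u w : E} (hψ : ‖ψ‖ = 1) (hu : ‖u‖ = 1)
    (hw : ‖w‖ = 1) :
    ‖⟪ψ, u⟫_𝕜‖ ^ 2 + ‖⟪ψ, w⟫_𝕜‖ ^ 2 + ‖⟪u, w⟫_𝕜‖ ^ 2 ≤
      1 + 2 * re (⟪ψ, u⟫_𝕜 * ⟪u, w⟫_𝕜 * conj ⟪ψ, w⟫_𝕜) := by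
  have hdet := (Matrix.posSemidef_gram 𝕜 ![ψ, u, w]).det_nonneg
  have h : (0 : 𝕜) ≤ ((1 + 2 * re (⟪ψ, u⟫_𝕜 * ⟪u, w⟫_𝕜 * conj ⟪ψ, w⟫_𝕜) - ‖⟪ψ, u⟫_𝕜‖ ^ 2 -
      ‖⟪ψ, w⟫_𝕜‖ ^ 2 - ‖⟪u, w⟫_𝕜‖ ^ 2 : ℝ) : 𝕜) := by
    convert hdet using 1
    simp only [Matrix.det_fin_three, Matrix.gram_apply, Matrix.cons_val,
      inner_self_eq_norm_sq_to_K, hψ, hu, hw, ← inner_conj_symm u ψ, ← inner_conj_symm w ψ,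
      ← inner_conj_symm w u, ofReal_sub, ofReal_add, ofReal_pow, ofReal_one, ofReal_ofNat,
      re_eq_add_conj, ← mul_conj, map_mul, conj_conj]
    ring
  linarith [ofReal_nonneg.mp h]

namespace LinearIsometryEquiv

theorem conj_inner_apply_apply_eq_mul_inner_symm_apply {U W : E ≃ₗᵢ[𝕜] E} {c : 𝕜}
    (hUW : ∀ x, U (W x) = c • W (U x)) (ψ : E) :
    conj ⟪U ψ, W ψ⟫_𝕜 = c * ⟪U.symm ψ, W.symm ψ⟫_𝕜 := by
  have hcomm : W.symm (U ψ) = c • U (W.symm ψ) := by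
    rw [W.symm_apply_eq, map_smul, ← hUW, W.apply_symm_apply]
  calc conj ⟪U ψ, W ψ⟫_𝕜 = ⟪ψ, W.symm (U ψ)⟫_𝕜 := by
        rw [inner_conj_symm, W.inner_map_eq_flip]
    _ = c * ⟪U.symm ψ, W.symm ψ⟫_𝕜 := by
        rw [hcomm, inner_smul_right, ← U.inner_map_map (U.symm ψ), U.apply_symm_apply]

theorem norm_inner_sq_add_le_re_mul_of_commute_smul {U W : E ≃ₗᵢ[𝕜] E} {c : 𝕜} (hc : ‖c‖ = 1)
    (hUW : ∀ x, U (W x) = c • W (U x)) {ψ : E} (hψ : ‖ψ‖ = 1) :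
    ‖⟪ψ, U ψ⟫_𝕜‖ ^ 2 + ‖⟪ψ, W ψ⟫_𝕜‖ ^ 2 + ‖⟪U ψ, W ψ⟫_𝕜‖ ^ 2 ≤
      1 + 2 * re (c * (⟪ψ, U ψ⟫_𝕜 * ⟪U ψ, W ψ⟫_𝕜 * conj ⟪ψ, W ψ⟫_𝕜)) := by
  have hΩ_symm : ⟪U.symm ψ, W.symm ψ⟫_𝕜 = conj c * conj ⟪U ψ, W ψ⟫_𝕜 := by
    rw [conj_inner_apply_apply_eq_mul_inner_symm_apply hUW, ← mul_assoc, RCLike.conj_mul, hc]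
    simp only [ofReal_one, one_pow, one_mul]
  have hgram := norm_inner_sq_add_le_of_norm_eq_one (𝕜 := 𝕜) hψ
    (by rwa [U.symm.norm_map]) (by rwa [W.symm.norm_map])
  rw [← U.inner_map_eq_flip, ← W.inner_map_eq_flip, hΩ_symm, ← inner_conj_symm,
    ← inner_conj_symm (W ψ)] at hgram
  have hcross : conj ⟪ψ, U ψ⟫_𝕜 * (conj c * conj ⟪U ψ, W ψ⟫_𝕜) * conj (conj ⟪ψ, W ψ⟫_𝕜) =
      conj (c * (⟪ψ, U ψ⟫_𝕜 * ⟪U ψ, W ψ⟫_𝕜 * conj ⟪ψ, W ψ⟫_𝕜)) := by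
    simp only [map_mul]
    ring
  simpa only [norm_conj, norm_mul, hc, one_mul, hcross, conj_re] using hgram

theorem norm_inner_sq_add_le_of_commute_smul {U W : E ≃ₗᵢ[𝕜] E} {c : 𝕜} (hc : ‖c‖ = 1)
    (hUW : ∀ x, U (W x) = c • W (U x)) {ψ : E} (hψ : ‖ψ‖ = 1) :
    ‖⟪ψ, U ψ⟫_𝕜‖ ^ 2 + ‖⟪ψ, W ψ⟫_𝕜‖ ^ 2 + ‖⟪U ψ, W ψ⟫_𝕜‖ ^ 2 ≤
      1 + ‖1 + c‖ / 2 * ‖⟪U ψ, W ψ⟫_𝕜‖ * (‖⟪ψ, U ψ⟫_𝕜‖ ^ 2 + ‖⟪ψ, W ψ⟫_𝕜‖ ^ 2) := by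
  have hgram := norm_inner_sq_add_le_of_norm_eq_one (𝕜 := 𝕜) hψ
    (by rwa [U.norm_map]) (by rwa [W.norm_map])
  have hgram_symm := norm_inner_sq_add_le_re_mul_of_commute_smul hc hUW hψ
  generalize ⟪ψ, U ψ⟫_𝕜 = a at *
  generalize ⟪ψ, W ψ⟫_𝕜 = b at *
  generalize ⟪U ψ, W ψ⟫_𝕜 = Ω at *
  have hre : re (a * Ω * conj b) + re (c * (a * Ω * conj b)) ≤
      ‖1 + c‖ * ‖Ω‖ * (‖a‖ * ‖b‖) := by
    rw [← re.map_add, ← one_add_mul]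
    refine (re_le_norm _).trans_eq ?_
    simp only [norm_mul, norm_conj]
    ring
  have hab : 2 * ‖a‖ * ‖b‖ ≤ ‖a‖ ^ 2 + ‖b‖ ^ 2 := two_mul_le_add_sq _ _
  have hcoef : 0 ≤ ‖1 + c‖ * ‖Ω‖ := by positivity
  nlinarith

end LinearIsometryEquiv

end

theorem weyl_pair_intermediate_bound_general
    {H : Type*} [NormedAddCommGroup H] [InnerProductSpace ℂ H]
    (U W : H →L[ℂ] H)
    (hU_inner : ∀ x y : H, ⟪U x, U y⟫_ℂ = ⟪x, y⟫_ℂ) (hU_surj : Function.Surjective U)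
    (hW_inner : ∀ x y : H, ⟪W x, W y⟫_ℂ = ⟪x, y⟫_ℂ) (hW_surj : Function.Surjective W)
    (γ : ℝ)
    (hWeyl : U ∘L W = Complex.exp (Complex.I * γ) • (W ∘L U))
    (ψ : H) (hψ : ‖ψ‖ = 1)
    (Λ : ℝ) (hΛ : Λ = ‖⟪ψ, U ψ⟫_ℂ‖ ^ 2 + ‖⟪ψ, W ψ⟫_ℂ‖ ^ 2)
    (Ω : ℂ) (hΩ : Ω = ⟪U ψ, W ψ⟫_ℂ)
    (z : ℝ) (hz : z = ‖1 + Complex.exp (Complex.I * γ)‖ / 2)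
    (hzΩ : z * ‖Ω‖ < 1) :
    Λ ≤ (1 - ‖Ω‖ ^ 2) / (1 - z * ‖Ω‖) := by
  obtain ⟨U', hU'⟩ : ∃ U' : H ≃ₗᵢ[ℂ] H, ⇑U' = U :=
    ⟨.ofSurjective ((U : H →ₗ[ℂ] H).isometryOfInner hU_inner) hU_surj, rfl⟩
  obtain ⟨W', hW'⟩ : ∃ W' : H ≃ₗᵢ[ℂ] H, ⇑W' = W :=
    ⟨.ofSurjective ((W : H →ₗ[ℂ] H).isometryOfInner hW_inner) hW_surj, rfl⟩
  have hc : ‖Complex.exp (Complex.I * γ)‖ = 1 := by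
    rw [mul_comm, Complex.norm_exp_ofReal_mul_I]
  have hUW : ∀ x, U' (W' x) = Complex.exp (Complex.I * γ) • W' (U' x) := fun x ↦ by
    simpa [hU', hW'] using DFunLike.congr_fun hWeyl x
  have h := U'.norm_inner_sq_add_le_of_commute_smul hc hUW hψ
  rw [hU', hW', ← hΛ, ← hΩ, ← hz] at h
  rw [le_div_iff₀ (by linarith)]
  linarith

/-- **Intermediate inequality in the proof of the ChUR.**
With `Λ = |⟨ψ,Uψ⟩|² + |⟨ψ,Wψ⟩|²`, `Ω = ⟨Uψ, Wψ⟩` and `z = |1 + e^{iγ}|/2`, the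
averaged Gram-determinant condition gives `Λ ≤ (1 − |Ω|²)/(1 − z·|Ω|)`
whenever `z·|Ω| < 1`. -/
theorem weyl_pair_intermediate_bound
    {H : Type*} [NormedAddCommGroup H] [InnerProductSpace ℂ H] [CompleteSpace H]
    (U W : H →L[ℂ] H)
    (hU_inner : ∀ x y : H, ⟪U x, U y⟫_ℂ = ⟪x, y⟫_ℂ) (hU_surj : Function.Surjective U)
    (hW_inner : ∀ x y : H, ⟪W x, W y⟫_ℂ = ⟪x, y⟫_ℂ) (hW_surj : Function.Surjective W)
    (γ : ℝ)
    (hWeyl : U ∘L W = Complex.exp (Complex.I * γ) • (W ∘L U))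
    (ψ : H) (hψ : ‖ψ‖ = 1)
    (Λ : ℝ) (hΛ : Λ = ‖⟪ψ, U ψ⟫_ℂ‖ ^ 2 + ‖⟪ψ, W ψ⟫_ℂ‖ ^ 2)
    (Ω : ℂ) (hΩ : Ω = ⟪U ψ, W ψ⟫_ℂ)
    (z : ℝ) (hz : z = ‖1 + Complex.exp (Complex.I * γ)‖ / 2)
    (hzΩ : z * ‖Ω‖ < 1) :
    Λ ≤ (1 - ‖Ω‖ ^ 2) / (1 - z * ‖Ω‖) :=
  weyl_pair_intermediate_bound_general U W hU_inner hU_surj hW_inner hW_surj γ hWeyl ψ hψ Λ hΛ Ω hΩ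
    z hz hzΩ
end

section
/- Let c ≥ 0 be a real number such that 2 − a·c ≤ B(a) for all a > 0, where B(a) = 2/(1 + √((1 − cos a)/2)). Then c ≥ 1. -/
/-!
For `0 < a < 2π` the bound is `g a`, where `g a = 2 / (1 + sin (a / 2))` is smooth with `g 0 = 2`
and `g' 0 = -1`. The hypothesis says that the line `2 - a c` stays below `g` to the right of `0`,
so its slope `-c` is at most the right derivative `-1`.
-/

open Real Filter Topology Set

theorem le_of_hasDerivWithinAt_Ioi_of_eventually_le {f : ℝ → ℝ} {f' m x : ℝ}
    (hf : HasDerivWithinAt f f' (Ioi x) x) (h : ∀ᶠ y in 𝓝[>] x, f x + m * (y - x) ≤ f y) :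
    m ≤ f' := by
  rw [hasDerivWithinAt_iff_tendsto_slope, sdiff_singleton_eq_self self_notMem_Ioi] at hf
  refine ge_of_tendsto hf ?_
  filter_upwards [h, self_mem_nhdsWithin] with y hy hxy
  rw [slope_def_field, le_div_iff₀ (sub_pos.2 hxy)]
  linarith

theorem sqrt_one_sub_cos_div_two (x : ℝ) : √((1 - cos x) / 2) = |sin (x / 2)| := by
  rw [← sqrt_sq_eq_abs, sin_sq_eq_half_sub, mul_div_cancel₀ x two_ne_zero]
  ring_nf

theorem hasDerivAt_two_div_one_add_sin_half :
    HasDerivAt (fun a ↦ 2 / (1 + sin (a / 2))) (-1) 0 := by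
  have hsin : HasDerivAt (fun a ↦ 1 + sin (a / 2)) (1 / 2) 0 := by
    simpa using ((hasDerivAt_id (0 : ℝ)).div_const 2).sin.const_add 1
  simpa using (hasDerivAt_const (0 : ℝ) (2 : ℝ)).fun_div hsin (by simp)

theorem extraction_lemma_general (c : ℝ)
    (h : ∀ a : ℝ, 0 < a → 2 - a * c ≤ 2 / (1 + Real.sqrt ((1 - Real.cos a) / 2))) :
    1 ≤ c := by
  suffices -c ≤ -1 by linarith
  refine le_of_hasDerivWithinAt_Ioi_of_eventually_le
    hasDerivAt_two_div_one_add_sin_half.hasDerivWithinAt ?_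
  filter_upwards [Ioo_mem_nhdsGT two_pi_pos] with a ⟨ha0, ha⟩
  have hsin : 0 ≤ sin (a / 2) := sin_nonneg_of_nonneg_of_le_pi (by linarith) (by linarith)
  have hB := h a ha0
  rw [sqrt_one_sub_cos_div_two, abs_of_nonneg hsin] at hB
  simpa [mul_comm] using hB

/-- **Extraction lemma for the Heisenberg bound.**
If `c ≥ 0` satisfies `2 − a·c ≤ B(a)` for all `a > 0`, where
`B(a) = 2/(1 + √((1 − cos a)/2))`, then `c ≥ 1`. -/
theorem extraction_lemma (c : ℝ) (hc : 0 ≤ c)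
    (h : ∀ a : ℝ, 0 < a → 2 - a * c ≤ 2 / (1 + Real.sqrt ((1 - Real.cos a) / 2))) :
    1 ≤ c :=
  extraction_lemma_general c h
end
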